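/- arXiv:math/0406255 — 2 statements merged into one kernel-verified Lean document; each statement's English description precedes it below -/
import Mathlib

section
/- Let k ∈ ℤ with k ≠ 0 and let E : ℂ → ℂ, E(z) = kπ·sinh(z), i.e. E(z) = a·e^z + b·e^{−z} with a = kπ/2, b = −kπ/2. Then the set of critical values of E is {kπi, −kπi}; E(kπi) = E(−kπi) = 0; 0 is a fixed point of E with E′(0) = kπ and |E′(0)| > 1; consequently each critical value w of E is strictly preperiodic: E^{∘(1+n)}(w) = E^{∘1}(w) for all n ≥ 1, while E^{∘m}(w) ≠ w for all m ≥ 1. Hence E is postsingularly preperiodic. -/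
open Filter Topology Set MeasureTheory

noncomputable section

/-- The cosine-type map `E(z) = a e^z + b e^{-z}`. -/
def E (a b : ℂ) (z : ℂ) : ℂ := a * Complex.exp z + b * Complex.exp (-z)

/-- `z` escapes to infinity under iteration of `E a b`. -/
def Escapes (a b : ℂ) (z : ℂ) : Prop :=
  Tendsto (fun k => ‖(E a b)^[k] z‖) atTop atTop

/-- `F(t) = e^t - 1`. -/
def FF (t : ℝ) : ℝ := Real.exp t - 1

/-- External addresses: entry `n` is `s_{n+1}`, an integer together with a label
(`true` = `R`, `false` = `L`). -/
abbrev Address := ℕ → ℤ × Bool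

/-- The left shift on external addresses. -/
def shift (s : Address) : Address := fun n => s (n + 1)

/-- The minimal potential `t_s` (infimum of admissible potentials; the set is
nonempty for exponentially bounded addresses). -/
def tmin (s : Address) : ℝ :=
  sInf {t : ℝ | 0 < t ∧
    Tendsto (fun k : ℕ => (|(s k).1| : ℝ) / FF^[k + 1] t) atTop (nhds 0)}

/-- An address is exponentially bounded if `|s_k| ≤ F^{∘(k-1)}(x)` for some `x > 0`. -/
def ExpBounded (s : Address) : Prop :=
  ∃ x > 0, ∀ k : ℕ, (|(s k).1| : ℝ) ≤ FF^[k] x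

/-- A dynamic ray family for `E a b`. -/
structure RayFamily (a b : ℂ) where
  α : ℂ
  β : ℂ
  g : Address → ℝ → ℂ
  injOn : ∀ s : Address, ExpBounded s → Set.InjOn (g s) (Set.Ioi (tmin s))
  contOn : ∀ s : Address, ExpBounded s → ContinuousOn (g s) (Set.Ioi (tmin s))
  asympR : ∀ s : Address, ExpBounded s → (s 0).2 = true →
    Tendsto (fun t : ℝ => g s t - ((t : ℂ) - α + 2 * (Real.pi : ℂ) * Complex.I * ((s 0).1 : ℂ)))
      atTop (nhds 0)
  asympL : ∀ s : Address, ExpBounded s → (s 0).2 = false →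
    Tendsto (fun t : ℝ => g s t - (-(t : ℂ) + β + 2 * (Real.pi : ℂ) * Complex.I * ((s 0).1 : ℂ)))
      atTop (nhds 0)
  conj : ∀ s : Address, ExpBounded s → ∀ t : ℝ, tmin s < t →
    E a b (g s t) = g (shift s) (FF t)
  mem_escaping : ∀ s : Address, ExpBounded s → ∀ t : ℝ, tmin s < t → Escapes a b (g s t)

/-- The union of all dynamic rays. -/
def RaySet (a b : ℂ) (rf : RayFamily a b) : Set ℂ :=
  {z : ℂ | ∃ s : Address, ExpBounded s ∧ ∃ t : ℝ, tmin s < t ∧ z = rf.g s t}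

/-- The ray `g_s` lands at `z`. -/
def Lands (a b : ℂ) (rf : RayFamily a b) (s : Address) (z : ℂ) : Prop :=
  Tendsto (rf.g s) (nhdsWithin (tmin s) (Set.Ioi (tmin s))) (nhds z)

/-- `E a b` is postsingularly preperiodic: both critical values are strictly preperiodic. -/
def PostsingularlyPreperiodic (a b : ℂ) : Prop :=
  ∀ w : ℂ, w ^ 2 = 4 * a * b →
    (∃ k ≥ 1, ∃ n ≥ 1, (E a b)^[k + n] w = (E a b)^[k] w) ∧
    (∀ m ≥ 1, (E a b)^[m] w ≠ w)

/-!
Writing `c = kπ`, the map is `E = c · sinh`. For any `E = a e^z + b e^{-z}` one has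
`E² - E'² = 4ab`, so its critical values are exactly the two square roots `±ci` of `4ab = -c²`.
Since `sinh (kπ i) = i sin (kπ) = 0`, both critical values are mapped to `0`, which is a
repelling fixed point (`E'(0) = c`, `|c| ≥ π`). A point that lands on a fixed point different
from itself after one step is strictly preperiodic.
-/

theorem Function.iterate_eq_of_apply_eq_fixedPt {α : Type*} {f : α → α} {w p : α}
    (hw : f w = p) (hp : Function.IsFixedPt f p) {m : ℕ} (hm : 1 ≤ m) : f^[m] w = p := by
  obtain ⟨n, rfl⟩ := Nat.exists_eq_add_of_le' hm
  rw [Function.iterate_succ_apply, hw, Function.iterate_fixed hp]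

theorem Function.strictlyPreperiodic_of_apply_eq_fixedPt {α : Type*} {f : α → α} {w p : α}
    (hw : f w = p) (hp : Function.IsFixedPt f p) (hwp : w ≠ p) :
    (∀ n ≥ 1, f^[1 + n] w = f^[1] w) ∧ ∀ m ≥ 1, f^[m] w ≠ w := by
  refine ⟨fun n _ => ?_, fun m hm h => hwp ?_⟩
  · rw [Function.iterate_eq_of_apply_eq_fixedPt hw hp (by omega),
      Function.iterate_eq_of_apply_eq_fixedPt hw hp le_rfl]
  · rw [← h, Function.iterate_eq_of_apply_eq_fixedPt hw hp hm]

theorem hasDerivAt_E (a b z : ℂ) :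
    HasDerivAt (E a b) (a * Complex.exp z - b * Complex.exp (-z)) z := by
  have hneg := (Complex.hasDerivAt_exp (-z)).comp z (hasDerivAt_neg z)
  have h := ((Complex.hasDerivAt_exp z).const_mul a).add (hneg.const_mul b)
  rw [mul_neg_one, mul_neg, ← sub_eq_add_neg] at h
  exact h

theorem deriv_E (a b z : ℂ) : deriv (E a b) z = a * Complex.exp z - b * Complex.exp (-z) :=
  (hasDerivAt_E a b z).deriv

theorem E_sq_sub_deriv_sq (a b z : ℂ) : E a b z ^ 2 - deriv (E a b) z ^ 2 = 4 * a * b := by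
  have h : Complex.exp z * Complex.exp (-z) = 1 := by
    rw [← Complex.exp_add, add_neg_cancel, Complex.exp_zero]
  rw [deriv_E, E]
  linear_combination 4 * a * b * h

theorem image_E_critical {a b : ℂ} (hab : a * b ≠ 0) :
    E a b '' {z | deriv (E a b) z = 0} = {w | w ^ 2 = 4 * a * b} := by
  ext w
  constructor
  · rintro ⟨z, hz, rfl⟩
    have h := E_sq_sub_deriv_sq a b z
    rw [show deriv (E a b) z = 0 from hz] at h
    simpa using h
  · intro (hw : w ^ 2 = 4 * a * b)
    have ha : a ≠ 0 := left_ne_zero_of_mul hab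
    have hw0 : w ≠ 0 := by
      rintro rfl
      exact hab (by linear_combination -hw / 4)
    -- the critical point with `a e^z = b e^{-z} = w / 2`
    have hexp : Complex.exp (Complex.log (w / (2 * a))) = w / (2 * a) :=
      Complex.exp_log (div_ne_zero hw0 (mul_ne_zero two_ne_zero ha))
    have hb : b * (2 * a / w) = w / 2 := by
      field_simp
      linear_combination -hw
    refine ⟨Complex.log (w / (2 * a)), ?_, ?_⟩
    · show deriv (E a b) _ = 0
      rw [deriv_E, Complex.exp_neg, hexp, inv_div, hb]
      field_simp
      ring
    · rw [E, Complex.exp_neg, hexp, inv_div, hb]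
      field_simp
      ring

section Sinh

variable (c : ℂ)

theorem E_half_neg_half (z : ℂ) : E (c / 2) (-c / 2) z = c * Complex.sinh z := by
  rw [E, Complex.sinh]
  ring

theorem E_half_neg_half_neg (z : ℂ) : E (c / 2) (-c / 2) (-z) = -E (c / 2) (-c / 2) z := by
  rw [E_half_neg_half, E_half_neg_half, Complex.sinh_neg, mul_neg]

theorem deriv_E_half_neg_half (z : ℂ) :
    deriv (E (c / 2) (-c / 2)) z = c * Complex.cosh z := by
  rw [deriv_E, Complex.cosh]
  ring

theorem sq_eq_four_mul_half_neg_half_iff (w : ℂ) :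
    w ^ 2 = 4 * (c / 2) * (-c / 2) ↔ w = c * Complex.I ∨ w = -(c * Complex.I) := by
  rw [← sq_eq_sq_iff_eq_or_eq_neg, mul_pow, Complex.I_sq]
  ring_nf

theorem E_half_neg_half_int_mul_pi_mul_I (k : ℤ) :
    E ((k : ℂ) * Real.pi / 2) (-((k : ℂ) * Real.pi) / 2) ((k : ℂ) * Real.pi * Complex.I) = 0 := by
  rw [E_half_neg_half, Complex.sinh_mul_I, Complex.sin_int_mul_pi, zero_mul, mul_zero]

theorem one_lt_norm_int_mul_pi {k : ℤ} (hk : k ≠ 0) : 1 < ‖(k : ℂ) * Real.pi‖ := by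
  rw [norm_mul, Complex.norm_intCast, Complex.norm_real, Real.norm_of_nonneg Real.pi_pos.le]
  have h1 : (1 : ℝ) ≤ |(k : ℝ)| := by exact_mod_cast Int.one_le_abs hk
  nlinarith [Real.pi_gt_three]

end Sinh

/-- `E(z) = kπ sinh z` is postsingularly preperiodic. -/
theorem sinh_map_postsingularly_preperiodic (k : ℤ) (hk : k ≠ 0) (a b : ℂ)
    (ha : a = (k : ℂ) * (Real.pi : ℂ) / 2) (hb : b = -((k : ℂ) * (Real.pi : ℂ)) / 2) :
    (E a b) '' {z : ℂ | deriv (E a b) z = 0} =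
      {(k : ℂ) * (Real.pi : ℂ) * Complex.I, -((k : ℂ) * (Real.pi : ℂ) * Complex.I)} ∧
    E a b ((k : ℂ) * (Real.pi : ℂ) * Complex.I) = 0 ∧
    E a b (-((k : ℂ) * (Real.pi : ℂ) * Complex.I)) = 0 ∧
    E a b 0 = 0 ∧
    deriv (E a b) 0 = (k : ℂ) * (Real.pi : ℂ) ∧
    1 < ‖deriv (E a b) 0‖ ∧
    (∀ w : ℂ, w ^ 2 = 4 * a * b →
      (∀ n ≥ 1, (E a b)^[1 + n] w = (E a b)^[1] w) ∧ (∀ m ≥ 1, (E a b)^[m] w ≠ w)) ∧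
    PostsingularlyPreperiodic a b := by
  subst ha hb
  set c : ℂ := (k : ℂ) * Real.pi
  have hc : c ≠ 0 :=
    mul_ne_zero (Int.cast_ne_zero.mpr hk) (Complex.ofReal_ne_zero.mpr Real.pi_ne_zero)
  have hplus : E (c / 2) (-c / 2) (c * Complex.I) = 0 := E_half_neg_half_int_mul_pi_mul_I k
  have hminus : E (c / 2) (-c / 2) (-(c * Complex.I)) = 0 := by
    rw [E_half_neg_half_neg, hplus, neg_zero]
  have hfix : E (c / 2) (-c / 2) 0 = 0 := by rw [E_half_neg_half, Complex.sinh_zero, mul_zero]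
  have hderiv : deriv (E (c / 2) (-c / 2)) 0 = c := by
    rw [deriv_E_half_neg_half, Complex.cosh_zero, mul_one]
  have hcrit : ∀ w : ℂ, w ^ 2 = 4 * (c / 2) * (-c / 2) →
      (∀ n ≥ 1, (E (c / 2) (-c / 2))^[1 + n] w = (E (c / 2) (-c / 2))^[1] w) ∧
      ∀ m ≥ 1, (E (c / 2) (-c / 2))^[m] w ≠ w := by
    intro w hw
    refine Function.strictlyPreperiodic_of_apply_eq_fixedPt ?_ hfix ?_
    · rcases (sq_eq_four_mul_half_neg_half_iff c w).mp hw with rfl | rfl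
      exacts [hplus, hminus]
    · rintro rfl
      exact hc (pow_eq_zero_iff two_ne_zero |>.mp (by linear_combination hw))
  have hab : c / 2 * (-c / 2) ≠ 0 :=
    mul_ne_zero (div_ne_zero hc two_ne_zero) (div_ne_zero (neg_ne_zero.mpr hc) two_ne_zero)
  have hrepel : 1 < ‖deriv (E (c / 2) (-c / 2)) 0‖ := by
    rw [hderiv]
    exact one_lt_norm_int_mul_pi hk
  refine ⟨?_, hplus, hminus, hfix, hderiv, hrepel, hcrit,
    fun w hw => ⟨⟨1, le_rfl, 1, le_rfl, (hcrit w hw).1 1 le_rfl⟩, (hcrit w hw).2⟩⟩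
  rw [image_E_critical hab]
  ext w
  exact sq_eq_four_mul_half_neg_half_iff c w
end
end

section
/- Let F : [0,∞) → [0,∞), F(t) = e^t − 1, and let (s_k)_{k≥1} be a sequence of integers. Then inf{t > 0 : lim_{k→∞} |s_k| / F^{∘k}(t) = 0} < ∞ if and only if there exists x > 0 such that |s_k| ≤ F^{∘(k−1)}(x) for all k ≥ 1 (where F^{∘0}(x) = x). -/
open Filter Topology Set MeasureTheory

noncomputable section

/-!
If `|s_k| ≤ F^{∘(k-1)}(x)`, then any `t > x` is admissible: for `0 ≤ x < y` the gap
`F^{∘k}(y) - F^{∘k}(x)` is at least `F^{∘k}(y - x)` (superadditivity of `F`), which tends to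
infinity, and `F(b) ≥ e^{b-a} F(a)` for `a ≤ b`, so `F^{∘k}(x) / F^{∘k}(y) → 0`. Conversely an
admissible `t` gives `|s_k| ≤ F^{∘k}(t) = F^{∘(k-1)}(F t)` for all large `k`, and enlarging the
starting point absorbs the finitely many remaining terms.
-/

lemma monotone_FF : Monotone FF := fun _ _ h => by
  simpa [FF] using Real.exp_le_exp.2 h

lemma add_sq_div_two_le_FF {u : ℝ} (hu : 0 ≤ u) : u + u ^ 2 / 2 ≤ FF u := by
  have := Real.quadratic_le_exp_of_nonneg hu
  rw [FF]; linarith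

lemma le_FF (t : ℝ) : t ≤ FF t := by
  have := Real.add_one_le_exp t
  rw [FF]; linarith

lemma le_iterate_FF (k : ℕ) (t : ℝ) : t ≤ FF^[k] t := by
  induction k with
  | zero => rfl
  | succ k ih => exact ih.trans (le_FF _) |>.trans_eq (Function.iterate_succ_apply' FF k t).symm

lemma add_mul_sq_div_two_le_iterate_FF {d : ℝ} (hd : 0 ≤ d) (k : ℕ) :
    d + k * (d ^ 2 / 2) ≤ FF^[k] d := by
  induction k with
  | zero => simp
  | succ k ih =>
    have hu : d ≤ FF^[k] d := le_iterate_FF k d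
    have hsq : d ^ 2 ≤ (FF^[k] d) ^ 2 := pow_le_pow_left₀ hd hu 2
    rw [Function.iterate_succ_apply']
    have := add_sq_div_two_le_FF (hd.trans hu)
    push_cast
    linarith

lemma tendsto_iterate_FF_atTop {d : ℝ} (hd : 0 < d) : Tendsto (FF^[·] d) atTop atTop := by
  refine tendsto_atTop_mono (add_mul_sq_div_two_le_iterate_FF hd.le) ?_
  exact tendsto_atTop_add_const_left _ d
    (tendsto_natCast_atTop_atTop.atTop_mul_const (by positivity))

lemma FF_sub_le_sub_FF {a b : ℝ} (ha : 0 ≤ a) (hab : a ≤ b) : FF (b - a) ≤ FF b - FF a := by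
  have h1 : 1 ≤ Real.exp a := Real.one_le_exp ha
  have h2 : 1 ≤ Real.exp (b - a) := Real.one_le_exp (sub_nonneg.2 hab)
  have hb : Real.exp b = Real.exp (b - a) * Real.exp a := by rw [← Real.exp_add, sub_add_cancel]
  simp only [FF, hb]
  nlinarith

lemma iterate_FF_sub_le {x y : ℝ} (hx : 0 ≤ x) (hxy : x ≤ y) (k : ℕ) :
    FF^[k] (y - x) ≤ FF^[k] y - FF^[k] x := by
  induction k with
  | zero => rfl
  | succ k ih =>
    have ha : 0 ≤ FF^[k] x := hx.trans (le_iterate_FF k x)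
    simp only [Function.iterate_succ_apply']
    exact (monotone_FF ih).trans (FF_sub_le_sub_FF ha (by linarith [ih, le_iterate_FF k (y - x)]))

lemma tendsto_iterate_FF_sub_atTop {x y : ℝ} (hx : 0 ≤ x) (hxy : x < y) :
    Tendsto (fun k => FF^[k] y - FF^[k] x) atTop atTop :=
  tendsto_atTop_mono (iterate_FF_sub_le hx hxy.le) (tendsto_iterate_FF_atTop (sub_pos.2 hxy))

lemma exp_sub_mul_FF_le {a b : ℝ} (hab : a ≤ b) : Real.exp (b - a) * FF a ≤ FF b := by
  have h : Real.exp (b - a) * Real.exp a = Real.exp b := by rw [← Real.exp_add, sub_add_cancel]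
  have := Real.one_le_exp (sub_nonneg.2 hab)
  rw [FF, FF, mul_sub, h]
  linarith

lemma iterate_FF_succ_div_le {x y : ℝ} (hx : 0 ≤ x) (hxy : x < y) (k : ℕ) :
    FF^[k + 1] x / FF^[k + 1] y ≤ Real.exp (-(FF^[k] y - FF^[k] x)) := by
  have hle : FF^[k] x ≤ FF^[k] y := (monotone_FF.iterate k) hxy.le
  have hpos : 0 < FF^[k + 1] y := (hx.trans_lt hxy).trans_le (le_iterate_FF _ y)
  rw [div_le_iff₀ hpos, Real.exp_neg, inv_mul_eq_div, le_div_iff₀ (Real.exp_pos _), mul_comm]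
  simp only [Function.iterate_succ_apply']
  exact exp_sub_mul_FF_le hle

lemma tendsto_iterate_FF_div {x y : ℝ} (hx : 0 ≤ x) (hxy : x < y) :
    Tendsto (fun k => FF^[k] x / FF^[k] y) atTop (𝓝 0) := by
  rw [← tendsto_add_atTop_iff_nat 1]
  refine squeeze_zero (fun k => div_nonneg ?_ ?_) (iterate_FF_succ_div_le hx hxy) ?_
  · exact hx.trans (le_iterate_FF _ x)
  · exact (hx.trans hxy.le).trans (le_iterate_FF _ y)
  · exact Real.tendsto_exp_neg_atTop_nhds_zero.comp (tendsto_iterate_FF_sub_atTop hx hxy)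

lemma exists_forall_le_iterate_FF_of_eventually {a : ℕ → ℝ} {y : ℝ} (hy : 0 < y)
    (h : ∀ᶠ k in atTop, a k ≤ FF^[k] y) : ∃ x > 0, ∀ k, a k ≤ FF^[k] x := by
  obtain ⟨N, hN⟩ := eventually_atTop.1 h
  obtain ⟨M, hM⟩ := ((Set.finite_lt_nat N).image a).bddAbove
  refine ⟨max y M, lt_max_of_lt_left hy, fun k => ?_⟩
  rcases lt_or_ge k N with hk | hk
  · exact (hM (mem_image_of_mem a hk)).trans (le_max_right y M) |>.trans (le_iterate_FF k _)
  · exact (hN k hk).trans ((monotone_FF.iterate k) (le_max_left y M))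

lemma EReal.sInf_image_coe_lt_top_iff (S : Set ℝ) :
    sInf ((fun t : ℝ => (t : EReal)) '' S) < ⊤ ↔ S.Nonempty := by
  constructor
  · intro h
    by_contra hS
    simp [Set.not_nonempty_iff_eq_empty.1 hS] at h
  · rintro ⟨t, ht⟩
    exact (sInf_le (mem_image_of_mem _ ht)).trans_lt (EReal.coe_lt_top t)

/-- Here `s k` denotes `s_{k+1}`, so the term `|s_k| / F^{∘k}(t)` (for `k ≥ 1`) is
`|s k| / F^[k+1] t`, and the bound `|s_k| ≤ F^{∘(k-1)}(x)` is `|s k| ≤ F^[k] x`. -/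
theorem tmin_finite_iff_exponentially_bounded (s : ℕ → ℤ) :
    sInf ((fun t : ℝ => (t : EReal)) ''
        {t : ℝ | 0 < t ∧
          Tendsto (fun k : ℕ => (|s k| : ℝ) / FF^[k + 1] t) atTop (nhds 0)}) < (⊤ : EReal) ↔
    ∃ x > 0, ∀ k : ℕ, (|s k| : ℝ) ≤ FF^[k] x := by
  rw [EReal.sInf_image_coe_lt_top_iff]
  constructor
  · rintro ⟨t, ht, hlim⟩
    refine exists_forall_le_iterate_FF_of_eventually (ht.trans_le (le_FF t)) ?_
    filter_upwards [hlim.eventually (gt_mem_nhds one_pos)] with k hk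
    rw [← Function.iterate_succ_apply]
    exact ((div_lt_one (ht.trans_le (le_iterate_FF _ t))).1 hk).le
  · rintro ⟨x, hx, hs⟩
    refine ⟨x + 1, by linarith, ?_⟩
    have hratio := (tendsto_iterate_FF_div hx.le (lt_add_one x)).comp (tendsto_add_atTop_nat 1)
    have hpos (k : ℕ) : 0 < FF^[k + 1] (x + 1) := by linarith [le_iterate_FF (k + 1) (x + 1)]
    refine squeeze_zero (fun k => div_nonneg (abs_nonneg _) (hpos k).le) (fun k => ?_) hratio
    refine div_le_div_of_nonneg_right ((hs k).trans ?_) (hpos k).le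
    exact (le_FF _).trans_eq (Function.iterate_succ_apply' FF k x).symm
end
end
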